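/- Let n ≥ 2 and let N > 1 be a divisor of n. Let φ be a finite-order automorphism of the one-sided shift on (Fin n)^ℕ and let (A, Φ) be a support of φ such that every based circuit of A has orbit length exactly N under Φ. Then there exists a support (Â, Φ̂) of φ such that every state of Â has orbit length exactly N under Φ̂. -/

import Mathlib

/-- The one-sided shift map on `(Fin n)^ℕ`: `(σ x) i = x (i+1)`. -/
def shiftMap (n : ℕ) : (ℕ → Fin n) → (ℕ → Fin n) := fun x i => x (i + 1)

/-- `b` has orbit length exactly `N` under `f`: `N` is the least `L ≥ 1` with `f^[L] b = b`. -/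
def HasOrbitLen {β : Type*} (f : β → β) (b : β) (N : ℕ) : Prop :=
  IsLeast {L : ℕ | 0 < L ∧ f^[L] b = b} N

/-- An automorphism of the one-sided shift: a homeomorphism commuting with the shift. -/
def IsShiftAut (n : ℕ) (φ : (ℕ → Fin n) ≃ₜ (ℕ → Fin n)) : Prop :=
  ⇑φ ∘ shiftMap n = shiftMap n ∘ ⇑φ

/-- `φ` has finite order. -/
def FiniteOrderAut (n : ℕ) (φ : (ℕ → Fin n) ≃ₜ (ℕ → Fin n)) : Prop :=
  ∃ m : ℕ, 0 < m ∧ (⇑φ)^[m] = id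

/-- Extension of the transition function of an automaton to words (letters read in order). -/
def transStar {n : ℕ} {Q : Type*} (π : Fin n → Q → Q) : List (Fin n) → Q → Q
  | [], q => q
  | x :: w, q => transStar π w (π x q)

/-- The automaton `(Q, π)` is synchronizing at level `k` with synchronizing map `s`. -/
def SyncAtLevelWith {n : ℕ} {Q : Type*} (π : Fin n → Q → Q) (k : ℕ)
    (s : List (Fin n) → Q) : Prop :=
  ∀ w : List (Fin n), w.length = k → ∀ q : Q, transStar π w q = s w

/-- The synchronizing map `s` at level `k` is surjective (the automaton is core). -/
def CoreAt {n : ℕ} {Q : Type*} (s : List (Fin n) → Q) (k : ℕ) : Prop :=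
  ∀ q : Q, ∃ w : List (Fin n), w.length = k ∧ s w = q

/-- An automorphism of the underlying digraph of the automaton `(Q, π)`. -/
structure DigraphAut {Q : Type*} (n : ℕ) (π : Fin n → Q → Q) where
  α : Q ≃ Q
  lab : Q → Equiv.Perm (Fin n)
  compat : ∀ (x : Fin n) (q : Q), π (lab q x) (α q) = α (π x q)

/-- Action of a digraph automorphism on the edge set `Q × Fin n`. -/
def edgeMap {Q : Type*} {n : ℕ} {π : Fin n → Q → Q} (Φ : DigraphAut n π) :
    Q × Fin n → Q × Fin n :=
  fun e => (Φ.α e.1, Φ.lab e.1 e.2)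

/-- The output word map `Λ` of a digraph automorphism. -/
def outWord {Q : Type*} {n : ℕ} (π : Fin n → Q → Q) (lab : Q → Equiv.Perm (Fin n)) :
    List (Fin n) → Q → List (Fin n)
  | [], _ => []
  | x :: w, q => lab q x :: outWord π lab w (π x q)

/-- Action of a digraph automorphism on based circuits: `(q, w) ↦ (α q, Λ(w, q))`. -/
def circMap {Q : Type*} {n : ℕ} {π : Fin n → Q → Q} (Φ : DigraphAut n π) :
    Q × List (Fin n) → Q × List (Fin n) :=
  fun c => (Φ.α c.1, outWord π Φ.lab c.2 c.1)

/-- `(q, w)` is a based circuit: `w` nonempty and `π*(w, q) = q`. -/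
def IsBasedCircuit {Q : Type*} {n : ℕ} (π : Fin n → Q → Q) (c : Q × List (Fin n)) : Prop :=
  c.2 ≠ [] ∧ transStar π c.2 c.1 = c.1

/-- The sliding block code induced by an automaton synchronizing at level `k`
with synchronizing map `s` and digraph automorphism with labelling `lab`:
`(F x) i = lab q_i (x i)` where `q_i = s [x(i+k), x(i+k-1), …, x(i+1)]`. -/
def inducedMap {Q : Type*} {n : ℕ} (k : ℕ) (s : List (Fin n) → Q)
    (lab : Q → Equiv.Perm (Fin n)) : (ℕ → Fin n) → (ℕ → Fin n) :=
  fun x i => lab (s (List.ofFn fun j : Fin k => x (i + k - (j : ℕ)))) (x i)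

/-- `(A, Φ)` (with `A` synchronizing and core) is a support of the shift automorphism `φ`. -/
def IsSupport {Q : Type*} (n : ℕ) (π : Fin n → Q → Q) (Φ : DigraphAut n π)
    (φ : (ℕ → Fin n) ≃ₜ (ℕ → Fin n)) : Prop :=
  ∃ (k : ℕ) (s : List (Fin n) → Q), SyncAtLevelWith π k s ∧ CoreAt s k ∧
    inducedMap k s Φ.lab = ⇑φ

/-- The permutation automorphism of the shift induced by a permutation of `Fin n`. -/
def permAutMap {n : ℕ} (ρ : Equiv.Perm (Fin n)) : (ℕ → Fin n) → (ℕ → Fin n) :=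
  fun x i => ρ (x i)

/-- `t` is heavy for `(A, Φ, N)` with divisibility constant `b`. -/
def Heavy {Q : Type*} {n : ℕ} (π : Fin n → Q → Q) (Φ : DigraphAut n π)
    (N b : ℕ) (t : Q) : Prop :=
  b ∣ N ∧ b ≠ N ∧ (∀ r : ℕ, HasOrbitLen (⇑Φ.α) t r → r ∣ b) ∧
  ∀ (q : Q) (x : Fin n), π x q = t →
    ∀ L : ℕ, HasOrbitLen (edgeMap Φ) (q, x) L → Nat.lcm L b = N

section Aux

variable {n : ℕ} {Q : Type*}

lemma transStar_append (π : Fin n → Q → Q) (u v : List (Fin n)) (q : Q) :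
    transStar π (u ++ v) q = transStar π v (transStar π u q) := by
  induction u generalizing q with
  | nil => rfl
  | cons a t ih => simp [transStar, ih]

lemma outWord_length (π : Fin n → Q → Q) (lab : Q → Equiv.Perm (Fin n))
    (w : List (Fin n)) (q : Q) : (outWord π lab w q).length = w.length := by
  induction w generalizing q with
  | nil => rfl
  | cons a t ih => simp [outWord, ih]

lemma outWord_append (π : Fin n → Q → Q) (lab : Q → Equiv.Perm (Fin n))
    (u v : List (Fin n)) (q : Q) :
    outWord π lab (u ++ v) q = outWord π lab u q ++ outWord π lab v (transStar π u q) := by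
  induction u generalizing q with
  | nil => rfl
  | cons a t ih => simp [outWord, transStar, ih]

lemma outWord_inj (π : Fin n → Q → Q) (lab : Q → Equiv.Perm (Fin n))
    (w₁ : List (Fin n)) : ∀ (w₂ : List (Fin n)) (q : Q),
    outWord π lab w₁ q = outWord π lab w₂ q → w₁ = w₂ := by
  induction w₁ with
  | nil =>
    intro w₂ q h
    cases w₂ with
    | nil => rfl
    | cons b t => simp [outWord] at h
  | cons a t ih =>
    intro w₂ q h
    cases w₂ with
    | nil => simp [outWord] at h
    | cons b t₂ =>
      simp only [outWord, List.cons.injEq] at h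
      obtain ⟨h1, h2⟩ := h
      obtain rfl : a = b := (lab q).injective h1
      rw [ih t₂ _ h2]

variable {π : Fin n → Q → Q}

lemma transStar_outWord (Φ : DigraphAut n π) (w : List (Fin n)) (q : Q) :
    transStar π (outWord π Φ.lab w q) (Φ.α q) = Φ.α (transStar π w q) := by
  induction w generalizing q with
  | nil => rfl
  | cons a t ih =>
    simp only [outWord, transStar, Φ.compat]
    exact ih (π a q)

lemma circMap_fst (Φ : DigraphAut n π) (c : Q × List (Fin n)) :
    (circMap Φ c).1 = Φ.α c.1 := rfl

lemma iter_fst (Φ : DigraphAut n π) (T : ℕ) (q : Q) (w : List (Fin n)) :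
    ((circMap Φ)^[T] (q, w)).1 = (⇑Φ.α)^[T] q := by
  induction T generalizing q w with
  | zero => rfl
  | succ T ih =>
    rw [Function.iterate_succ_apply, Function.iterate_succ_apply]
    exact ih (Φ.α q) (outWord π Φ.lab w q)

lemma iter_len (Φ : DigraphAut n π) (T : ℕ) (q : Q) (w : List (Fin n)) :
    ((circMap Φ)^[T] (q, w)).2.length = w.length := by
  induction T generalizing q w with
  | zero => rfl
  | succ T ih =>
    rw [Function.iterate_succ_apply]
    rw [show circMap Φ (q, w) = (Φ.α q, outWord π Φ.lab w q) from rfl]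
    rw [ih, outWord_length]

lemma alpha_transStar_iter (Φ : DigraphAut n π) (T : ℕ) (q : Q) (u : List (Fin n)) :
    (⇑Φ.α)^[T] (transStar π u q) = transStar π ((circMap Φ)^[T] (q, u)).2 ((⇑Φ.α)^[T] q) := by
  induction T generalizing q u with
  | zero => rfl
  | succ T ih =>
    rw [Function.iterate_succ_apply, Function.iterate_succ_apply,
      Function.iterate_succ_apply]
    rw [show Φ.α (transStar π u q) = transStar π (outWord π Φ.lab u q) (Φ.α q) from
      (transStar_outWord Φ u q).symm]
    exact ih (Φ.α q) (outWord π Φ.lab u q)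

lemma iter_split (Φ : DigraphAut n π) (T : ℕ) (q : Q) (u v : List (Fin n)) :
    (circMap Φ)^[T] (q, u ++ v) =
      (((circMap Φ)^[T] (q, u)).1,
        ((circMap Φ)^[T] (q, u)).2 ++ ((circMap Φ)^[T] (transStar π u q, v)).2) := by
  induction T generalizing q u v with
  | zero => rfl
  | succ T ih =>
    rw [Function.iterate_succ_apply]
    rw [show circMap Φ (q, u ++ v) = (Φ.α q, outWord π Φ.lab (u ++ v) q) from rfl]
    rw [outWord_append, ih]
    rw [Function.iterate_succ_apply, Function.iterate_succ_apply]
    rw [show circMap Φ (q, u) = (Φ.α q, outWord π Φ.lab u q) from rfl]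
    rw [show circMap Φ (transStar π u q, v)
        = (Φ.α (transStar π u q), outWord π Φ.lab v (transStar π u q)) from rfl]
    rw [transStar_outWord Φ u q]

lemma split_fixed (Φ : DigraphAut n π) (T : ℕ) (q : Q) (u v : List (Fin n))
    (h : (circMap Φ)^[T] (q, u ++ v) = (q, u ++ v)) :
    (circMap Φ)^[T] (q, u) = (q, u) ∧
      (circMap Φ)^[T] (transStar π u q, v) = (transStar π u q, v) := by
  rw [iter_split] at h
  have h1 : ((circMap Φ)^[T] (q, u)).1 = q := congrArg Prod.fst h
  have h2 := congrArg Prod.snd h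
  simp only at h2
  obtain ⟨hu, hv⟩ := List.append_inj h2 (iter_len Φ T q u)
  have hqu : (circMap Φ)^[T] (q, u) = (q, u) := by
    rw [Prod.ext_iff]; exact ⟨h1, hu⟩
  refine ⟨hqu, ?_⟩
  have hfst : ((circMap Φ)^[T] (transStar π u q, v)).1 = transStar π u q := by
    rw [iter_fst, alpha_transStar_iter Φ T q u, ← iter_fst Φ T q u, h1, hu]
  rw [Prod.ext_iff]; exact ⟨hfst, hv⟩

end Aux

section Constr

variable {n : ℕ} [NeZero n] {Q : Type} (π : Fin n → Q → Q) (Φ : DigraphAut n π) (J : ℕ)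

/-- The new transition: state = (state `J+1` steps ago, last `J+1` letters read). -/
def nTrans : Fin n → Q × List.Vector (Fin n) (J + 1) → Q × List.Vector (Fin n) (J + 1) :=
  fun x p => (π p.2.1.headI p.1,
    ⟨p.2.1.tail ++ [x], by
      have h := p.2.2
      simp only [List.length_append, List.length_tail, h, List.length_singleton]
      omega⟩)

def nLab : Q × List.Vector (Fin n) (J + 1) → Equiv.Perm (Fin n) :=
  fun p => Φ.lab (transStar π p.2.1 p.1)

def nAlphFun : Q × List.Vector (Fin n) (J + 1) → Q × List.Vector (Fin n) (J + 1) :=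
  fun p => (Φ.α p.1, ⟨outWord π Φ.lab p.2.1 p.1, by rw [outWord_length]; exact p.2.2⟩)

/-- projection to `Q × List`. -/
def ιp : Q × List.Vector (Fin n) (J + 1) → Q × List (Fin n) := fun p => (p.1, p.2.1)

lemma ιp_inj : Function.Injective (ιp (n := n) (Q := Q) (J := J)) := by
  intro p₁ p₂ h
  have h1 : (ιp J p₁).1 = (ιp J p₂).1 := congrArg Prod.fst h
  have h2 : (ιp J p₁).2 = (ιp J p₂).2 := congrArg Prod.snd h
  exact Prod.ext h1 (Subtype.ext h2)

lemma ιp_alph (p : Q × List.Vector (Fin n) (J + 1)) :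
    ιp J (nAlphFun π Φ J p) = circMap Φ (ιp J p) := rfl

lemma ιp_alph_iter (T : ℕ) (p : Q × List.Vector (Fin n) (J + 1)) :
    ιp J ((nAlphFun π Φ J)^[T] p) = (circMap Φ)^[T] (ιp J p) := by
  induction T generalizing p with
  | zero => rfl
  | succ T ih =>
    rw [Function.iterate_succ_apply, Function.iterate_succ_apply, ← ιp_alph, ih]

lemma nAlphFun_inj : Function.Injective (nAlphFun π Φ J) := by
  intro p₁ p₂ h
  have h1 : Φ.α p₁.1 = Φ.α p₂.1 := congrArg Prod.fst h
  obtain h1' : p₁.1 = p₂.1 := Φ.α.injective h1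
  have h2 : outWord π Φ.lab p₁.2.1 p₁.1 = outWord π Φ.lab p₂.2.1 p₂.1 :=
    congrArg (fun z => z.2.1) h
  rw [h1'] at h2
  have := outWord_inj π Φ.lab _ _ _ h2
  exact Prod.ext h1' (Subtype.ext this)

variable [Fintype Q]

lemma nAlphFun_bij : Function.Bijective (nAlphFun π Φ J) :=
  Finite.injective_iff_bijective.mp (nAlphFun_inj π Φ J)

noncomputable def nAut : DigraphAut n (nTrans π J) where
  α := Equiv.ofBijective _ (nAlphFun_bij π Φ J)
  lab := nLab π Φ J
  compat := by
    rintro x ⟨q, m, hm⟩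
    show nTrans π J _ (nAlphFun π Φ J (q, ⟨m, hm⟩)) = nAlphFun π Φ J (nTrans π J x (q, ⟨m, hm⟩))
    cases m with
    | nil => simp at hm
    | cons a m' =>
      apply ιp_inj J
      unfold ιp nTrans nAlphFun nLab
      simp only [outWord, transStar, List.headI, List.tail]
      refine Prod.ext ?_ ?_
      · exact Φ.compat a q
      · show outWord π Φ.lab m' (π a q) ++ [Φ.lab (transStar π m' (π a q)) x]
          = outWord π Φ.lab (m' ++ [x]) (π a q)
        rw [outWord_append]
        rfl

/-- synchronizing map for the new automaton at level `(J+1)+k`. -/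
def nSync (s : List (Fin n) → Q) (k : ℕ) :
    List (Fin n) → Q × List.Vector (Fin n) (J + 1) :=
  fun z =>
    if h : z.length = (J + 1) + k then
      (s (z.take k), ⟨z.drop k, by simp only [List.length_drop, h]; omega⟩)
    else (s (z.take k), ⟨List.replicate (J + 1) default, by simp⟩)

lemma transStar_nTrans (z : List (Fin n)) :
    ∀ (p : Q × List.Vector (Fin n) (J + 1)),
    transStar (nTrans π J) z p
      = (transStar π ((p.2.1 ++ z).take z.length) p.1,
          ⟨(p.2.1 ++ z).drop z.length, by
            simp only [List.length_drop, List.length_append, p.2.2]; omega⟩) := by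
  induction z with
  | nil =>
    rintro ⟨q, m, hm⟩
    simp [transStar]
  | cons x z' ih =>
    rintro ⟨q, m, hm⟩
    cases m with
    | nil => simp at hm
    | cons a m' =>
      show transStar (nTrans π J) z' (nTrans π J x (q, ⟨a :: m', hm⟩)) = _
      rw [show nTrans π J x (q, ⟨a :: m', hm⟩)
          = (π a q, ⟨m' ++ [x], by
              have := hm; simp only [List.length_cons] at this
              simp only [List.length_append, List.length_singleton]; omega⟩) from rfl]
      rw [ih]
      apply ιp_inj J
      unfold ιp
      refine Prod.ext ?_ ?_
      · show transStar π (((m' ++ [x]) ++ z').take z'.length) (π a q)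
          = transStar π (((a :: m') ++ x :: z').take (x :: z').length) q
        have hl : ((a :: m') ++ x :: z').take (x :: z').length
            = a :: ((m' ++ [x]) ++ z').take z'.length := by
          simp only [List.cons_append, List.length_cons, List.take_succ_cons,
            List.append_assoc, List.singleton_append, List.nil_append]
        rw [hl]
        rfl
      · show ((m' ++ [x]) ++ z').drop z'.length
          = ((a :: m') ++ x :: z').drop (x :: z').length
        simp only [List.cons_append, List.length_cons, List.drop_succ_cons,
          List.append_assoc, List.singleton_append, List.nil_append]

end Constr
theorem exists_support_with_all_states_orbit_len
    (n N : ℕ) (hn : 2 ≤ n) (hN : 1 < N) (hdvd : N ∣ n)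
    (φ : (ℕ → Fin n) ≃ₜ (ℕ → Fin n)) (hφ : IsShiftAut n φ)
    (hfin : FiniteOrderAut n φ)
    (Q : Type) [Fintype Q] [Nonempty Q] (π : Fin n → Q → Q)
    (Φ : DigraphAut n π) (hsupp : IsSupport n π Φ φ)
    (hcirc : ∀ c : Q × List (Fin n), IsBasedCircuit π c →
      HasOrbitLen (circMap Φ) c N) :
    ∃ (Q' : Type) (_ : Fintype Q') (_ : Nonempty Q') (π' : Fin n → Q' → Q')
      (Φ' : DigraphAut n π'),
      IsSupport n π' Φ' φ ∧ ∀ q : Q', HasOrbitLen (⇑Φ'.α) q N := by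
  haveI : NeZero n := ⟨by omega⟩
  obtain ⟨k, s, hs, hc, heq⟩ := hsupp
  set J : ℕ := max k (Fintype.card Q) with hJ
  have hkJ : k ≤ J := le_max_left _ _
  have hcardJ : Fintype.card Q ≤ J := le_max_right _ _
  refine ⟨Q × List.Vector (Fin n) (J + 1), inferInstance,
    ⟨(Classical.arbitrary Q, ⟨List.replicate (J + 1) default, by simp⟩)⟩,
    nTrans π J, nAut π Φ J, ?_, ?_⟩
  · -- IsSupport
    refine ⟨(J + 1) + k, nSync J s k, ?_, ?_, ?_⟩
    · -- sync
      intro z hz p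
      rw [transStar_nTrans]
      simp only [nSync]
      rw [dif_pos hz]
      have harith : (J + 1) + k - (J + 1) = k := by omega
      refine Prod.ext ?_ (Subtype.ext ?_)
      · show transStar π ((p.2.1 ++ z).take z.length) p.1 = s (z.take k)
        rw [List.take_append, p.2.2, hz, harith,
          List.take_of_length_le (by rw [p.2.2]; omega), transStar_append]
        exact hs (z.take k) (by rw [List.length_take, hz]; omega) _
      · show (p.2.1 ++ z).drop z.length = z.drop k
        rw [List.drop_append, p.2.2, hz, harith,
          List.drop_eq_nil_of_le (by rw [p.2.2]; omega), List.nil_append]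
    · -- core
      intro p
      obtain ⟨u, hu, hsu⟩ := hc p.1
      refine ⟨u ++ p.2.1, by rw [List.length_append, hu, p.2.2]; omega, ?_⟩
      simp only [nSync]
      rw [dif_pos (by rw [List.length_append, hu, p.2.2]; omega)]
      refine Prod.ext ?_ (Subtype.ext ?_)
      · show s ((u ++ p.2.1).take k) = p.1
        rw [List.take_left' hu]
        exact hsu
      · show (u ++ p.2.1).drop k = p.2.1
        rw [List.drop_left' hu]
    · -- induced map
      rw [← heq]
      funext x i
      have key : ∀ z : List (Fin n), z.length = (J + 1) + k →
          z.drop (J + 1) = (List.ofFn fun t : Fin k => x (i + k - (t : ℕ))) →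
          nLab π Φ J (nSync J s k z)
            = Φ.lab (s (List.ofFn fun t : Fin k => x (i + k - (t : ℕ)))) := by
        intro z hz hzd
        simp only [nSync]
        rw [dif_pos hz]
        show Φ.lab (transStar π (z.drop k) (s (z.take k))) = _
        have h1 : z.drop k = (z.drop k).take (J + 1 - k) ++ z.drop (J + 1) := by
          conv_lhs => rw [← List.take_append_drop (J + 1 - k) (z.drop k)]
          rw [List.drop_drop]
          congr 2
          omega
        rw [h1, transStar_append, hzd,
          hs (List.ofFn fun t : Fin k => x (i + k - (t : ℕ))) List.length_ofFn _]
      show nLab π Φ J (nSync J s k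
          (List.ofFn fun t : Fin ((J + 1) + k) => x (i + ((J + 1) + k) - (t : ℕ)))) (x i)
        = Φ.lab (s (List.ofFn fun t : Fin k => x (i + k - (t : ℕ)))) (x i)
      rw [key _ List.length_ofFn ?_]
      apply List.ext_getElem
      · simp only [List.length_drop, List.length_ofFn]
        omega
      · intro t ht1 ht2
        rw [List.getElem_drop, List.getElem_ofFn, List.getElem_ofFn]
        show x (i + ((J + 1) + k) - ((J + 1) + t)) = x (i + k - t)
        congr 1
        have htk : t < k := by
          simpa using ht2
        omega
  · -- orbit lengths
    rintro ⟨q, m, hm⟩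
    have hco : ⇑((nAut π Φ J).α) = nAlphFun π Φ J := rfl
    unfold HasOrbitLen
    rw [hco]
    have hset : {L : ℕ | 0 < L ∧ (nAlphFun π Φ J)^[L] (q, ⟨m, hm⟩) = (q, ⟨m, hm⟩)}
        = {T : ℕ | 0 < T ∧ (circMap Φ)^[T] (q, m) = (q, m)} := by
      ext T
      simp only [Set.mem_setOf_eq]
      constructor
      · rintro ⟨h0, hf⟩
        refine ⟨h0, ?_⟩
        have := congrArg (ιp J) hf
        rwa [ιp_alph_iter] at this
      · rintro ⟨h0, hf⟩
        refine ⟨h0, ?_⟩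
        apply ιp_inj J
        rw [ιp_alph_iter]
        exact hf
    rw [hset]
    constructor
    · -- N is a period
      refine ⟨by omega, ?_⟩
      obtain ⟨u, hu, hsu⟩ := hc q
      have hCirc : IsBasedCircuit π (q, m ++ u) := by
        constructor
        · show m ++ u ≠ []
          have : m ≠ [] := by
            intro h; rw [h] at hm; simp at hm
          simp [this]
        · show transStar π (m ++ u) q = q
          rw [transStar_append, hs u hu _, hsu]
      have hfix := (hcirc (q, m ++ u) hCirc).1.2
      exact (split_fixed Φ N q m u hfix).1
    · -- N is least
      rintro T ⟨hT0, hTfix⟩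
      have hcard : Fintype.card Q < Fintype.card (Fin (J + 2)) := by
        rw [Fintype.card_fin]; omega
      obtain ⟨a, b, hab, hfab⟩ := Fintype.exists_ne_map_eq_of_card_lt
        (fun t : Fin (J + 2) => transStar π (m.take (t : ℕ)) q) hcard
      have hEx : ∃ A B : ℕ, A < B ∧ B ≤ J + 1 ∧
          transStar π (m.take A) q = transStar π (m.take B) q := by
        rcases lt_or_gt_of_ne hab with h | h
        · exact ⟨a, b, h, by omega, hfab⟩
        · exact ⟨b, a, h, by omega, hfab.symm⟩
      obtain ⟨A, B, hALB, hBle, hfeq⟩ := hEx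
      set w : List (Fin n) := (m.drop A).take (B - A) with hw
      have hmtakeB : m.take B = m.take A ++ w := by
        conv_lhs => rw [show B = A + (B - A) by omega]
        exact List.take_add (l := m) (i := A) (j := B - A)
      have hmm : m = m.take A ++ (w ++ m.drop B) := by
        rw [← List.append_assoc, ← hmtakeB, List.take_append_drop]
      have hwlen : w.length = B - A := by
        rw [hw, List.length_take, List.length_drop, hm]
        omega
      have hwne : w ≠ [] := by
        intro h
        rw [h] at hwlen
        simp at hwlen
        omega
      have hCirc' : IsBasedCircuit π (transStar π (m.take A) q, w) := by
        refine ⟨hwne, ?_⟩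
        show transStar π w (transStar π (m.take A) q) = transStar π (m.take A) q
        rw [← transStar_append, ← hmtakeB, ← hfeq]
      have hTfix' : (circMap Φ)^[T] (q, m.take A ++ (w ++ m.drop B))
          = (q, m.take A ++ (w ++ m.drop B)) := by
        rw [← hmm]; exact hTfix
      have h1 := (split_fixed Φ T q (m.take A) (w ++ m.drop B) hTfix').2
      have h2 := (split_fixed Φ T (transStar π (m.take A) q) w (m.drop B) h1).1
      exact (hcirc (transStar π (m.take A) q, w) hCirc').2 ⟨hT0, h2⟩
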